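/- For all real s, t: (s/2){t+s brace s} − (t/2)∫₀ˢ (∂/∂t){t+u brace u} du = s(C₁(st) + sC₂(st)) = ∑_{m=1}^∞ [s^m t^{m-1}/(m!(m-1)!) + s^{m+1}t^{m-1}/((m+1)!(m-1)!)]. -/

import Mathlib

/-!
`C_ν` is entire with `C_ν' = C_{ν+1}`, and comparing coefficients (with
`(m+ν+1)! = (m+ν+1) (m+ν)!`) gives the recurrence `z C_{ν+2} + (ν+1) C_{ν+1} = C_ν`.
Since `{t+u brace u} = 2 C₀(ut) + (t+u) C₁(ut)`, its `t`-derivative is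
`(2u+1) C₁(ut) + u(t+u) C₂(ut)`, which by the recurrence is the `u`-derivative of
`2u(u+1) C₂(ut) + u²(t+u) C₃(ut)`. The fundamental theorem of calculus evaluates the integral,
the recurrence for `ν = 0, 1` collapses the combination to `s (C₁(st) + s C₂(st))`, and the
series is obtained by multiplying out the series of `C₁` and `C₂`.
-/

open Nat

/-- The real Bessel–Clifford function of the first kind `C_ν(z) = ∑ z^m/(m!(m+ν)!)`. -/
noncomputable def besselCliffordR (ν : ℕ) (z : ℝ) : ℝ :=
  ∑' m : ℕ, z ^ m / ((Nat.factorial m : ℝ) * (Nat.factorial (m + ν) : ℝ))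

lemma natCast_factorial_le_mul_factorial (m k : ℕ) : (m ! : ℝ) ≤ m ! * k ! :=
  le_mul_of_one_le_right (by positivity) (Nat.one_le_cast.2 k.factorial_pos)

lemma summable_besselCliffordR_terms (ν : ℕ) (z : ℝ) :
    Summable fun m : ℕ => z ^ m / ((m ! : ℝ) * (m + ν)!) := by
  refine .of_norm_bounded (Real.summable_pow_div_factorial |z|) fun m => ?_
  rw [norm_div, norm_pow, Real.norm_eq_abs, Real.norm_of_nonneg (by positivity)]
  exact div_le_div_of_nonneg_left (by positivity) (by positivity)
    (natCast_factorial_le_mul_factorial m (m + ν))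

lemma natCast_mul_pow_pred_le_two_mul_pow {R y : ℝ} (hR : 1 ≤ R) (hy : |y| ≤ R) (n : ℕ) :
    n * |y| ^ (n - 1) ≤ (2 * R) ^ n := by
  rw [mul_pow]
  gcongr
  · exact_mod_cast Nat.lt_two_pow_self.le
  · exact (pow_le_pow_left₀ (abs_nonneg y) hy _).trans (pow_le_pow_right₀ hR (n.sub_le 1))

lemma hasDerivAt_besselCliffordR (ν : ℕ) (z : ℝ) :
    HasDerivAt (besselCliffordR ν) (besselCliffordR (ν + 1) z) z := by
  set R := |z| + 1
  have hR : 1 ≤ R := le_add_of_nonneg_left (abs_nonneg z)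
  have hz : z ∈ Metric.ball (0 : ℝ) R := by simp [R]
  have hshift :
      (fun n : ℕ => ((n + 1 : ℕ) : ℝ) * z ^ (n + 1 - 1) / ((n + 1)! * (n + 1 + ν)! : ℝ))
        = fun n : ℕ => z ^ n / ((n ! : ℝ) * (n + (ν + 1))!) := by
    funext n
    rw [Nat.add_sub_cancel, Nat.factorial_succ, show n + 1 + ν = n + (ν + 1) by omega]
    push_cast
    field_simp
  have hseries : ∑' n : ℕ, (n : ℝ) * z ^ (n - 1) / ((n ! : ℝ) * (n + ν)!)
      = besselCliffordR (ν + 1) z := by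
    rw [tsum_eq_zero_add' (hshift ▸ summable_besselCliffordR_terms (ν + 1) z), hshift]
    simp [besselCliffordR]
  rw [← hseries]
  refine hasDerivAt_tsum_of_isPreconnected (u := fun n => (2 * R) ^ n / n !)
    (Real.summable_pow_div_factorial _) Metric.isOpen_ball (convex_ball 0 R).isPreconnected
    (fun n y _ => (hasDerivAt_pow n y).div_const _) (fun n y hy => ?_) hz
    (summable_besselCliffordR_terms ν z) hz
  rw [mem_ball_zero_iff, Real.norm_eq_abs] at hy
  simp only [norm_div, norm_mul, norm_pow, Real.norm_eq_abs, Nat.abs_cast]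
  exact div_le_div₀ (by positivity) (natCast_mul_pow_pred_le_two_mul_pow hR hy.le n)
    (by positivity) (natCast_factorial_le_mul_factorial n (n + ν))

@[fun_prop]
lemma continuous_besselCliffordR (ν : ℕ) : Continuous (besselCliffordR ν) :=
  continuous_iff_continuousAt.2 fun z => (hasDerivAt_besselCliffordR ν z).continuousAt

lemma besselCliffordR_recurrence (ν : ℕ) (z : ℝ) :
    z * besselCliffordR (ν + 2) z + (ν + 1) * besselCliffordR (ν + 1) z =
      besselCliffordR ν z := by
  let a (m : ℕ) : ℝ := z ^ m / (m ! * (m + (ν + 1))!)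
  have hshift : (fun m : ℕ => ((m + 1 : ℕ) : ℝ) * a (m + 1))
      = fun m : ℕ => z * (z ^ m / ((m ! : ℝ) * (m + (ν + 2))!)) := by
    funext m
    simp only [a]
    rw [show m + 1 + (ν + 1) = m + (ν + 2) by omega, Nat.factorial_succ m]
    push_cast
    field_simp
    ring
  have hsummable : Summable fun m : ℕ => ((m + 1 : ℕ) : ℝ) * a (m + 1) :=
    hshift ▸ (summable_besselCliffordR_terms (ν + 2) z).mul_left z
  have hfirst : z * besselCliffordR (ν + 2) z = ∑' m : ℕ, (m : ℝ) * a m := by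
    rw [tsum_eq_zero_add' (f := fun m : ℕ => (m : ℝ) * a m) hsummable, hshift, besselCliffordR,
      tsum_mul_left]
    simp
  have hsecond : (ν + 1) * besselCliffordR (ν + 1) z = ∑' m : ℕ, ((ν : ℝ) + 1) * a m := by
    rw [besselCliffordR, ← tsum_mul_left]
  have hsummable' : Summable fun m : ℕ => (m : ℝ) * a m :=
    (summable_nat_add_iff 1).1 hsummable
  rw [hfirst, hsecond, ← hsummable'.tsum_add
    ((summable_besselCliffordR_terms (ν + 1) z).mul_left ((ν : ℝ) + 1)), besselCliffordR]
  refine tsum_congr fun m => ?_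
  simp only [a]
  rw [← Nat.add_assoc, Nat.factorial_succ (m + ν)]
  push_cast
  field_simp
  ring

lemma hasSum_pow_mul_besselCliffordR (k ν : ℕ) (s t : ℝ) :
    HasSum (fun m : ℕ => s ^ (m + k) * t ^ m / (((m + ν)! : ℝ) * m !))
      (s ^ k * besselCliffordR ν (s * t)) := by
  refine ((summable_besselCliffordR_terms ν (s * t)).hasSum.mul_left (s ^ k)).congr_fun
    fun m => ?_
  ring

/-- The (real) continuous binomial coefficient `{t brace a}`. -/
noncomputable def contBinomR (t a : ℝ) : ℝ :=
  2 * ∑' n : ℕ, a ^ n * (t - a) ^ n / ((Nat.factorial n : ℝ) ^ 2) +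
    t * ∑' n : ℕ, a ^ n * (t - a) ^ n / ((Nat.factorial (n + 1) : ℝ) * (Nat.factorial n : ℝ))

lemma contBinomR_add_self (t s : ℝ) :
    contBinomR (t + s) s = 2 * besselCliffordR 0 (s * t) + (t + s) * besselCliffordR 1 (s * t) := by
  simp only [contBinomR, besselCliffordR, add_sub_cancel_right, ← mul_pow, sq, add_zero,
    mul_comm (((_ : ℕ) + 1)! : ℝ)]

lemma hasDerivAt_contBinomR_add_self (s t : ℝ) :
    HasDerivAt (fun t' => contBinomR (t' + s) s)
      ((2 * s + 1) * besselCliffordR 1 (s * t) + s * (t + s) * besselCliffordR 2 (s * t)) t := by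
  simp_rw [contBinomR_add_self]
  have hC (ν : ℕ) : HasDerivAt (fun t' => besselCliffordR ν (s * t'))
      (besselCliffordR (ν + 1) (s * t) * s) t := by
    simpa [Function.comp_def] using
      (hasDerivAt_besselCliffordR ν (s * t)).comp t ((hasDerivAt_id t).const_mul s)
  refine (((hC 0).const_mul 2).add (((hasDerivAt_id t).add_const s).mul (hC 1))).congr_deriv ?_
  simp
  ring

lemma hasDerivAt_contBinomR_primitive (t u : ℝ) :
    HasDerivAt (fun u =>
        2 * u * (u + 1) * besselCliffordR 2 (u * t) + u ^ 2 * (t + u) * besselCliffordR 3 (u * t))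
      ((2 * u + 1) * besselCliffordR 1 (u * t) + u * (t + u) * besselCliffordR 2 (u * t)) u := by
  have hC (ν : ℕ) : HasDerivAt (fun u => besselCliffordR ν (u * t))
      (besselCliffordR (ν + 1) (u * t) * t) u := by
    simpa [Function.comp_def] using
      (hasDerivAt_besselCliffordR ν (u * t)).comp u (hasDerivAt_mul_const t)
  have hp : HasDerivAt (fun u : ℝ => 2 * u * (u + 1)) (4 * u + 2) u := by
    refine (((hasDerivAt_id u).const_mul 2).mul ((hasDerivAt_id u).add_const 1)).congr_deriv ?_
    simp
    ring
  have hq : HasDerivAt (fun u : ℝ => u ^ 2 * (t + u)) (2 * u * (t + u) + u ^ 2) u := by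
    refine ((hasDerivAt_pow 2 u).mul ((hasDerivAt_id u).const_add t)).congr_deriv ?_
    simp
  have h1 := besselCliffordR_recurrence 1 (u * t)
  have h2 := besselCliffordR_recurrence 2 (u * t)
  push_cast at h1 h2
  refine ((hp.mul (hC 2)).add (hq.mul (hC 3))).congr_deriv ?_
  linear_combination (2 * u + 1) * h1 + u * (t + u) * h2

lemma integral_deriv_contBinomR_add_self (s t : ℝ) :
    ∫ u in (0 : ℝ)..s, deriv (fun t' => contBinomR (t' + u) u) t
      = 2 * s * (s + 1) * besselCliffordR 2 (s * t)
        + s ^ 2 * (t + s) * besselCliffordR 3 (s * t) := by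
  simp_rw [(hasDerivAt_contBinomR_add_self _ t).deriv]
  rw [intervalIntegral.integral_eq_sub_of_hasDerivAt
    (fun u _ => hasDerivAt_contBinomR_primitive t u)
    (Continuous.intervalIntegrable (by fun_prop) _ _)]
  simp

theorem contBinom_combination (s t : ℝ) :
    s / 2 * contBinomR (t + s) s -
        t / 2 * ∫ u in (0:ℝ)..s, deriv (fun t' : ℝ => contBinomR (t' + u) u) t =
      s * (besselCliffordR 1 (s * t) + s * besselCliffordR 2 (s * t)) ∧
    s * (besselCliffordR 1 (s * t) + s * besselCliffordR 2 (s * t)) =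
      ∑' m : ℕ,
        (s ^ (m + 1) * t ^ m / ((Nat.factorial (m + 1) : ℝ) * (Nat.factorial m : ℝ)) +
          s ^ (m + 2) * t ^ m / ((Nat.factorial (m + 2) : ℝ) * (Nat.factorial m : ℝ))) := by
  constructor
  · rw [integral_deriv_contBinomR_add_self, contBinomR_add_self]
    have h0 := besselCliffordR_recurrence 0 (s * t)
    have h1 := besselCliffordR_recurrence 1 (s * t)
    push_cast at h0 h1
    linear_combination (-s) * h0 - s * (t + s) / 2 * h1
  · rw [((hasSum_pow_mul_besselCliffordR 1 1 s t).add
      (hasSum_pow_mul_besselCliffordR 2 2 s t)).tsum_eq]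
    ring
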